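/- Let H be a nonempty proper minor-closed graph class. For every graph G, H-tw(G) ≤ 4·H-link(G) + 4. (Lemma 11.5) -/

import Mathlib

open SimpleGraph

set_option autoImplicit false

/-- `H` is a minor of `G`: the standard branch-set (minor model) definition. -/
def SimpleGraph.IsMinorOf {W V : Type} (H : SimpleGraph W) (G : SimpleGraph V) : Prop :=
  ∃ φ : W → Set V,
    (∀ w, (φ w).Nonempty) ∧
    (∀ w, (G.induce (φ w)).Connected) ∧
    (∀ w₁ w₂, w₁ ≠ w₂ → Disjoint (φ w₁) (φ w₂)) ∧
    (∀ w₁ w₂, H.Adj w₁ w₂ → ∃ v₁ ∈ φ w₁, ∃ v₂ ∈ φ w₂, G.Adj v₁ v₂)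
/-- A graph class: a (property of) simple graphs over all finite vertex types.
Closure under isomorphism is subsumed by minor-closedness below, since isomorphic
graphs are minors of each other. -/
abbrev GraphClass : Type 1 := ∀ (V : Type) [Finite V], SimpleGraph V → Prop

/-- The class `C` is minor-closed. -/
def MinorClosed (C : GraphClass) : Prop :=
  ∀ (V W : Type) [Finite V] [Finite W] (G : SimpleGraph V) (H : SimpleGraph W),
    H.IsMinorOf G → C V G → C W H

/-- The class `C` is proper: it does not contain all graphs. -/
def ProperClass (C : GraphClass) : Prop :=
  ∃ (V : Type) (_ : Finite V) (G : SimpleGraph V), ¬ C V G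

/-- The class `C` is nonempty. -/
def NonemptyClass (C : GraphClass) : Prop :=
  ∃ (V : Type) (_ : Finite V) (G : SimpleGraph V), C V G
/-- `K` is the vertex set of a connected component of `G - S`. -/
def IsCompOf {V : Type} (G : SimpleGraph V) (S K : Set V) : Prop :=
  ∃ D : (G.induce Sᶜ).ConnectedComponent, K = Subtype.val '' D.supp
/-- Every connected component of `G - S` belongs to the class `C`. -/
def CompsIn (C : GraphClass) {V : Type} [Finite V] (G : SimpleGraph V) (S : Set V) : Prop :=
  ∀ K : Set V, IsCompOf G S K → C ↥K (G.induce K)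
/-- The torso of `G` on `X`: the induced graph `G[X]` together with a clique on the
neighbourhood of every connected component of `G - X`. -/
def torso {V : Type} (G : SimpleGraph V) (X : Set V) : SimpleGraph ↥X :=
  SimpleGraph.fromRel fun u v =>
    G.Adj ↑u ↑v ∨ ∃ K : Set V, IsCompOf G X K ∧ (∃ w ∈ K, G.Adj ↑u w) ∧ ∃ w ∈ K, G.Adj ↑v w
/-- `(Tg, β)` is a tree decomposition of `G`. -/
def IsTreeDecomp {V T : Type} (G : SimpleGraph V) (Tg : SimpleGraph T) (β : T → Set V) : Prop :=
  Tg.IsTree ∧ (∀ v : V, ∃ t, v ∈ β t) ∧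
    (∀ u v : V, G.Adj u v → ∃ t, u ∈ β t ∧ v ∈ β t) ∧
    ∀ v : V, (Tg.induce {t | v ∈ β t}).Connected

/-- `G` has a tree decomposition of width at most `k` (all bags of size at most `k + 1`). -/
def HasTWLE {V : Type} (G : SimpleGraph V) (k : ℕ) : Prop :=
  ∃ (T : Type) (_ : Finite T) (Tg : SimpleGraph T) (β : T → Set V),
    IsTreeDecomp G Tg β ∧ ∀ t, (β t).ncard ≤ k + 1
/-- `C`-treewidth: the least `k` such that for some `X ⊆ V(G)`, every connected component of
`G - X` belongs to `C` and the torso of `G` on `X` has treewidth at most `k`. -/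
noncomputable def Htw (C : GraphClass) {V : Type} [Finite V] (G : SimpleGraph V) : ℕ :=
  sInf {k | ∃ X : Set V, CompsIn C G X ∧ HasTWLE (torso G X) k}
/-- `X` is `k`-`C`-linked in `G`: for every `S` of size at most `k` there is a
connected component of `G - S` which is not in `C` and contains more than two thirds
of `X`. -/
def HLinked (C : GraphClass) {V : Type} [Finite V] (G : SimpleGraph V) (k : ℕ)
    (X : Set V) : Prop :=
  ∀ S : Set V, S.ncard ≤ k →
    ∃ K : Set V, IsCompOf G S K ∧ ¬ C ↥K (G.induce K) ∧ 2 * X.ncard < 3 * (K ∩ X).ncard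
/-- The maximum `k` such that `G` contains a `k`-`C`-linked set (`0` if there is none). -/
noncomputable def Hlink (C : GraphClass) {V : Type} [Finite V] (G : SimpleGraph V) : ℕ :=
  sSup {k | ∃ X : Set V, HLinked C G k X}

section Helpers
variable {V : Type} (G : SimpleGraph V)

/-- map reachability between induced subgraphs along a vertex map preserving adjacency -/
lemma reach_map_induce {α β : Type} {G₁ : SimpleGraph α} {G₂ : SimpleGraph β}
    (f : α → β) (hf : ∀ a b, G₁.Adj a b → G₂.Adj (f a) (f b))
    {s : Set α} {t : Set β} (hst : ∀ a ∈ s, f a ∈ t) {x y : ↥s}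
    (h : (G₁.induce s).Reachable x y) :
    (G₂.induce t).Reachable ⟨f x.1, hst x.1 x.2⟩ ⟨f y.1, hst y.1 y.2⟩ := by
  let g : (G₁.induce s) →g (G₂.induce t) :=
    ⟨fun a => ⟨f a.1, hst a.1 a.2⟩, by
      intro a b hab
      exact hf a.1 b.1 hab⟩
  exact h.map g

lemma reach_mono {W₁ W₂ : Set V} (h : W₁ ⊆ W₂) {a b : ↥W₁}
    (hr : (G.induce W₁).Reachable a b) :
    (G.induce W₂).Reachable ⟨a.1, h a.2⟩ ⟨b.1, h b.2⟩ :=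
  reach_map_induce id (fun _ _ hab => hab) (fun x hx => h hx) hr

lemma connected_of_all_reach {α : Type} {G' : SimpleGraph α} (a₀ : α)
    (h : ∀ a, G'.Reachable a a₀) : G'.Connected :=
  (connected_iff G').mpr ⟨fun a b => (h a).trans (h b).symm, ⟨a₀⟩⟩

lemma connected_of_subsingleton {α : Type} [Subsingleton α] [Nonempty α]
    (G' : SimpleGraph α) : G'.Connected :=
  (connected_iff G').mpr ⟨fun a b => by rw [Subsingleton.elim a b], ‹_›⟩

/-- the component of `v` in `G - S`, as a subset of `V` -/
def cSet (S : Set V) (v : V) (hv : v ∉ S) : Set V :=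
  Subtype.val '' ((G.induce (Sᶜ : Set V)).connectedComponentMk ⟨v, hv⟩).supp

lemma mem_cSet {S : Set V} {v : V} {hv : v ∉ S} {u : V} :
    u ∈ cSet G S v hv ↔ ∃ hu : u ∉ S, (G.induce (Sᶜ : Set V)).Reachable ⟨u, hu⟩ ⟨v, hv⟩ := by
  constructor
  · rintro ⟨⟨u', hu'⟩, hmem, rfl⟩
    exact ⟨hu', (ConnectedComponent.eq).mp ((ConnectedComponent.mem_supp_iff _ _).mp hmem)⟩
  · rintro ⟨hu, hr⟩
    exact ⟨⟨u, hu⟩, (ConnectedComponent.mem_supp_iff _ _).mpr ((ConnectedComponent.eq).mpr hr), rfl⟩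

lemma self_mem_cSet {S : Set V} {v : V} (hv : v ∉ S) : v ∈ cSet G S v hv :=
  (mem_cSet G).mpr ⟨hv, Reachable.refl _⟩

lemma cSet_not_mem {S : Set V} {v : V} {hv : v ∉ S} {u : V} (hu : u ∈ cSet G S v hv) : u ∉ S :=
  ((mem_cSet G).mp hu).1

lemma cSet_closed {S : Set V} {v : V} {hv : v ∉ S} {u w : V}
    (hu : u ∈ cSet G S v hv) (hadj : G.Adj u w) (hw : w ∉ S) : w ∈ cSet G S v hv := by
  obtain ⟨hu', hr⟩ := (mem_cSet G).mp hu
  refine (mem_cSet G).mpr ⟨hw, Reachable.trans ?_ hr⟩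
  exact Adj.reachable (by exact hadj.symm : (G.induce (Sᶜ : Set V)).Adj ⟨w, hw⟩ ⟨u, hu'⟩)

lemma isCompOf_cSet (S : Set V) (v : V) (hv : v ∉ S) : IsCompOf G S (cSet G S v hv) :=
  ⟨_, rfl⟩

lemma cSet_connected (S : Set V) (v : V) (hv : v ∉ S) :
    (G.induce (cSet G S v hv)).Connected := by
  refine connected_of_all_reach ⟨v, self_mem_cSet G hv⟩ ?_
  rintro ⟨u, hu⟩
  obtain ⟨hu', hr⟩ := (mem_cSet G).mp hu
  obtain ⟨p⟩ := hr
  suffices h : ∀ (a c : ↥(Sᶜ : Set V)) (p : (G.induce (Sᶜ : Set V)).Walk a c)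
      (ha : a.1 ∈ cSet G S v hv), ∃ hc : c.1 ∈ cSet G S v hv,
      (G.induce (cSet G S v hv)).Reachable ⟨a.1, ha⟩ ⟨c.1, hc⟩ by
    obtain ⟨hc, hr⟩ := h ⟨u, hu'⟩ ⟨v, hv⟩ p hu
    exact hr
  intro a c p
  induction p with
  | nil => intro ha; exact ⟨ha, Reachable.refl _⟩
  | @cons a b c h p ih =>
    intro ha
    have hb : b.1 ∈ cSet G S v hv := cSet_closed G ha (by exact h) b.2
    obtain ⟨hc, hr⟩ := ih hb
    have step : (G.induce (cSet G S v hv)).Adj ⟨a.1, ha⟩ ⟨b.1, hb⟩ := by exact h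
    exact ⟨hc, (step.reachable).trans hr⟩

lemma cSet_eq_cSet {S : Set V} {v x : V} {hv : v ∉ S} {hx : x ∉ S}
    (h : x ∈ cSet G S v hv) : cSet G S x hx = cSet G S v hv := by
  obtain ⟨hx', hr⟩ := (mem_cSet G).mp h
  have hmk : (G.induce (Sᶜ : Set V)).connectedComponentMk ⟨x, hx⟩ =
      (G.induce (Sᶜ : Set V)).connectedComponentMk ⟨v, hv⟩ := ConnectedComponent.eq.mpr hr
  show Subtype.val '' _ = Subtype.val '' _
  rw [hmk]

/-- a connected, closed, disjoint-from-S set containing v equals the component of v -/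
lemma cSet_eq_of {S K : Set V} {v : V} (hv : v ∉ S) (hmem : v ∈ K)
    (hdisj : ∀ x ∈ K, x ∉ S)
    (hcl : ∀ a ∈ K, ∀ w, G.Adj a w → w ∉ S → w ∈ K)
    (hconn : (G.induce K).Connected) : K = cSet G S v hv := by
  apply Set.eq_of_subset_of_subset
  · intro u hu
    have hr : (G.induce K).Reachable ⟨u, hu⟩ ⟨v, hmem⟩ := hconn.preconnected _ _
    let g : (G.induce K) →g (G.induce (Sᶜ : Set V)) :=
      ⟨fun a => ⟨a.1, hdisj a.1 a.2⟩, fun hab => hab⟩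
    exact (mem_cSet G).mpr ⟨hdisj u hu, hr.map g⟩
  · intro u hu
    obtain ⟨hu', hr⟩ := (mem_cSet G).mp hu
    obtain ⟨p⟩ := hr.symm
    -- walk from v to u inside Sᶜ; stays in K by closedness
    suffices h : ∀ (a c : ↥(Sᶜ : Set V)) (p : (G.induce (Sᶜ : Set V)).Walk a c),
        a.1 ∈ K → c.1 ∈ K by exact h ⟨v, hv⟩ ⟨u, hu'⟩ p hmem
    intro a c p
    induction p with
    | nil => exact id
    | @cons a b c h p ih =>
      intro ha
      exact ih (hcl a.1 ha b.1 (by exact h) b.2)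

lemma subset_cSet {S K : Set V} {v : V} (hv : v ∉ S) (hmem : v ∈ K)
    (hdisj : ∀ x ∈ K, x ∉ S) (hconn : (G.induce K).Connected) :
    K ⊆ cSet G S v hv := by
  intro u hu
  have hr : (G.induce K).Reachable ⟨u, hu⟩ ⟨v, hmem⟩ := hconn.preconnected _ _
  let g : (G.induce K) →g (G.induce (Sᶜ : Set V)) :=
    ⟨fun a => ⟨a.1, hdisj a.1 a.2⟩, fun hab => hab⟩
  exact (mem_cSet G).mpr ⟨hdisj u hu, hr.map g⟩

/-- components of `G - Y` starting in a "closed region" `A` stay in `A` -/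
lemma cSet_subset_of_closed {A B Y : Set V} {v : V} (hv : v ∉ Y)
    (hcl : ∀ a ∈ A, ∀ w, G.Adj a w → w ∈ A ∪ B) (hBY : B ⊆ Y) (hvA : v ∈ A) :
    cSet G Y v hv ⊆ A := by
  intro u hu
  obtain ⟨hu', hr⟩ := (mem_cSet G).mp hu
  obtain ⟨p⟩ := hr.symm
  suffices h : ∀ (a c : ↥(Yᶜ : Set V)) (p : (G.induce (Yᶜ : Set V)).Walk a c),
      a.1 ∈ A → c.1 ∈ A by exact h ⟨v, hv⟩ ⟨u, hu'⟩ p hvA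
  intro a c p
  induction p with
  | nil => exact id
  | @cons a b c h p ih =>
    intro ha
    rcases hcl a.1 ha b.1 (by exact h) with hb | hb
    · exact ih hb
    · exact absurd (hBY hb) b.2

end Helpers

section MinorMono
variable {V : Type} [Finite V] (G : SimpleGraph V)

lemma C_mono (C : GraphClass) (hmc : MinorClosed C) {K' K : Set V} (hsub : K' ⊆ K)
    (hK : C ↥K (G.induce K)) : C ↥K' (G.induce K') := by
  refine hmc ↥K ↥K' (G.induce K) (G.induce K') ?_ hK
  refine ⟨fun w => {⟨w.1, hsub w.2⟩}, ?_, ?_, ?_, ?_⟩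
  · intro w; exact ⟨⟨w.1, hsub w.2⟩, rfl⟩
  · intro w
    haveI : Nonempty ↥({⟨w.1, hsub w.2⟩} : Set ↥K) := ⟨⟨_, rfl⟩⟩
    haveI : Subsingleton ↥({⟨w.1, hsub w.2⟩} : Set ↥K) :=
      ⟨fun x y => Subtype.ext (x.2.trans y.2.symm)⟩
    exact connected_of_subsingleton _
  · intro w₁ w₂ hne
    rw [Set.disjoint_singleton_left, Set.mem_singleton_iff]
    intro h
    have h2 : (⟨w₁.1, hsub w₁.2⟩ : ↥K).1 = (⟨w₂.1, hsub w₂.2⟩ : ↥K).1 := congrArg Subtype.val h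
    exact hne (Subtype.ext h2)
  · intro w₁ w₂ hadj
    exact ⟨_, rfl, _, rfl, by exact hadj⟩

lemma C_congr (C : GraphClass) {K₁ K₂ : Set V} (h : K₁ = K₂)
    (hC : C ↥K₁ (G.induce K₁)) : C ↥K₂ (G.induce K₂) := by
  subst h; exact hC

end MinorMono

section Glue

variable {ι : Type} {Tt : ι → Type} (Tg : ∀ i, SimpleGraph (Tt i)) (rt : ∀ i, Tt i)

def glueRel : Option (Σ i, Tt i) → Option (Σ i, Tt i) → Prop :=
  fun a b => (a = none ∧ ∃ i, b = some ⟨i, rt i⟩) ∨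
    (∃ i t u, (Tg i).Adj t u ∧ a = some ⟨i, t⟩ ∧ b = some ⟨i, u⟩)

def glue : SimpleGraph (Option (Σ i, Tt i)) := SimpleGraph.fromRel (glueRel Tg rt)

lemma glue_adj_of_adj {i : ι} {t u : Tt i} (h : (Tg i).Adj t u) :
    (glue Tg rt).Adj (some ⟨i, t⟩) (some ⟨i, u⟩) := by
  refine ⟨?_, Or.inl (Or.inr ⟨i, t, u, h, rfl, rfl⟩)⟩
  intro hc
  obtain ⟨h1, h2⟩ := Sigma.mk.inj_iff.mp (Option.some.inj hc)
  exact h.ne (eq_of_heq h2)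

lemma glue_adj_root (i : ι) : (glue Tg rt).Adj none (some ⟨i, rt i⟩) :=
  ⟨by simp, Or.inl (Or.inl ⟨rfl, i, rfl⟩)⟩

lemma glue_adj_none {b : Option (Σ i, Tt i)} (h : (glue Tg rt).Adj none b) :
    ∃ i, b = some ⟨i, rt i⟩ := by
  obtain ⟨hne, h | h⟩ := h
  · rcases h with ⟨_, hi⟩ | ⟨i, t, u, _, ha, _⟩
    · exact hi
    · exact absurd ha (by simp)
  · rcases h with ⟨hb, _⟩ | ⟨i, t, u, _, _, hb⟩
    · exact absurd hb.symm hne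
    · exact absurd hb (by simp)

lemma glue_adj_some {i : ι} {t : Tt i} {b : Option (Σ i, Tt i)}
    (h : (glue Tg rt).Adj (some ⟨i, t⟩) b) :
    (b = none ∧ t = rt i) ∨ ∃ u, b = some ⟨i, u⟩ ∧ (Tg i).Adj t u := by
  obtain ⟨hne, h | h⟩ := h
  · rcases h with ⟨ha, _⟩ | ⟨j, x, y, hadj, ha, hb⟩
    · exact absurd ha (by simp)
    · obtain ⟨hij, hxy⟩ := Sigma.mk.inj_iff.mp (Option.some.inj ha)
      subst hij
      obtain rfl : t = x := eq_of_heq hxy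
      exact Or.inr ⟨y, hb, hadj⟩
  · rcases h with ⟨hb, j, ha⟩ | ⟨j, x, y, hadj, hb, ha⟩
    · obtain ⟨hij, hxy⟩ := Sigma.mk.inj_iff.mp (Option.some.inj ha)
      subst hij
      exact Or.inl ⟨hb, eq_of_heq hxy⟩
    · obtain ⟨hij, hxy⟩ := Sigma.mk.inj_iff.mp (Option.some.inj ha)
      subst hij
      obtain rfl : t = y := eq_of_heq hxy
      exact Or.inr ⟨x, hb, hadj.symm⟩

def glueHom (i : ι) : (Tg i) →g (glue Tg rt) :=
  ⟨fun t => some ⟨i, t⟩, fun h => glue_adj_of_adj Tg rt h⟩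

lemma glueHom_injective (i : ι) : Function.Injective (glueHom Tg rt i) := by
  intro a b h
  obtain ⟨_, h2⟩ := Sigma.mk.inj_iff.mp (Option.some.inj h)
  exact eq_of_heq h2

lemma glue_connected (h : ∀ i, (Tg i).Connected) : (glue Tg rt).Connected := by
  refine connected_of_all_reach none ?_
  intro a
  cases a with
  | none => exact Reachable.refl _
  | some s =>
    obtain ⟨i, t⟩ := s
    have h1 : (Tg i).Reachable t (rt i) := (h i).preconnected t (rt i)
    have h2 := h1.map (glueHom Tg rt i)
    exact h2.trans (glue_adj_root Tg rt i).symm.reachable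

/-- a walk avoiding `none` stays in its branch and can be reflected -/
lemma glue_reflect {i : ι} : ∀ {a b : Option (Σ i, Tt i)} (p : (glue Tg rt).Walk a b)
    (ta : Tt i) (ha : a = some ⟨i, ta⟩) (hnone : none ∉ p.support),
    ∃ (tb : Tt i) (hb : some ⟨i, tb⟩ = b) (q : (Tg i).Walk ta tb),
      hb ▸ (q.map (glueHom Tg rt i)) = ha ▸ p := by
  intro a b p
  induction p with
  | nil =>
    intro ta ha _
    subst ha
    exact ⟨ta, rfl, Walk.nil, rfl⟩
  | @cons a c b hadj p ih =>
    intro ta ha hnone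
    subst ha
    rcases glue_adj_some Tg rt hadj with ⟨rfl, _⟩ | ⟨u, rfl, hadj'⟩
    · exact absurd (Walk.start_mem_support p) (by
        intro hc; exact hnone (List.mem_cons_of_mem _ hc))
    · obtain ⟨tb, hb, q, hq⟩ := ih u rfl (by
        intro hc; exact hnone (List.mem_cons_of_mem _ hc))
      subst hb
      refine ⟨tb, rfl, Walk.cons hadj' q, ?_⟩
      simp only [Walk.map_cons]
      simp only at hq
      rw [hq]
      rfl
end Glue

section GlueTree
variable {ι : Type} {Tt : ι → Type} (Tg : ∀ i, SimpleGraph (Tt i)) (rt : ∀ i, Tt i)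

lemma glue_isAcyclic (h : ∀ i, (Tg i).IsAcyclic) : (glue Tg rt).IsAcyclic := by
  classical
  intro v c hc
  by_cases hn : none ∈ c.support
  · have hc' := hc.rotate hn
    set w := c.rotate none hn with hw
    clear_value w
    have hlen : 3 ≤ w.length := hc'.three_le_length
    cases w with
    | nil => simp at hlen
    | @cons _ x _ hadj p =>
      obtain ⟨i, rfl⟩ := glue_adj_none Tg rt hadj
      have hnodup : p.support.Nodup := by
        have := hc'.support_nodup
        rwa [Walk.support_cons] at this
      have hne : (none : Option (Σ i, Tt i)) ≠ some ⟨i, rt i⟩ := by simp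
      obtain ⟨z, h2, q', hpr⟩ := Walk.exists_eq_cons_of_ne hne p.reverse
      obtain ⟨j, rfl⟩ := glue_adj_none Tg rt h2
      have hsupp : p.support = q'.support.reverse ++ [none] := by
        have h3 : p.support.reverse = none :: q'.support := by
          rw [← Walk.support_reverse, hpr, Walk.support_cons]
        rw [← List.reverse_reverse p.support, h3, List.reverse_cons]
      rw [hsupp] at hnodup
      have hq'nodup : q'.support.Nodup := by
        have := (List.nodup_append.mp hnodup).1
        rwa [List.nodup_reverse] at this
      have hnonmem : (none : Option (Σ i, Tt i)) ∉ q'.support := by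
        have := (List.nodup_append.mp hnodup).2.2
        intro hmem
        exact this _ (List.mem_reverse.mpr hmem) _ (by simp) rfl
      obtain ⟨tb, hb, q, hq⟩ := glue_reflect Tg rt q' (rt j) rfl hnonmem
      -- hb : some ⟨j, tb⟩ = some ⟨i, rt i⟩ so j = i
      obtain ⟨hji, htb⟩ := Sigma.mk.inj_iff.mp (Option.some.inj hb)
      subst hji
      obtain rfl : tb = rt j := eq_of_heq htb
      -- so z = some ⟨j, rt j⟩ equals the endpoint some ⟨i, rt i⟩ = same
      -- q' : Walk (some ⟨j, rt j⟩) (some ⟨j, rt j⟩)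
      cases q' with
      | nil =>
        -- p.reverse = cons h2 nil, so p.length = 1, w.length = 2 < 3
        have : p.length = 1 := by
          have := congrArg Walk.length hpr
          simpa using this
        simp [Walk.length_cons, this] at hlen
      | @cons _ y _ h3 q'' =>
        -- support = start :: q''.support with end ∈ q''.support
        have hend : (some ⟨j, rt j⟩ : Option (Σ i, Tt i)) ∈ q''.support :=
          Walk.end_mem_support q''
        rw [Walk.support_cons] at hq'nodup
        exact (List.nodup_cons.mp hq'nodup).1 hend
  · cases v with
    | none => exact hn (Walk.start_mem_support c)
    | some s =>
      obtain ⟨i, t⟩ := s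
      obtain ⟨tb, hb, q, hq⟩ := glue_reflect Tg rt c t rfl hn
      obtain ⟨-, htb⟩ := Sigma.mk.inj_iff.mp (Option.some.inj hb)
      obtain rfl : tb = t := eq_of_heq htb
      have hq' : q.map (glueHom Tg rt i) = c := by simp at hq; exact hq
      rw [← hq'] at hc
      exact h i q ((Walk.map_isCycle_iff_of_injective (glueHom_injective Tg rt i)).mp hc)

lemma glue_isTree (h : ∀ i, (Tg i).IsTree) : (glue Tg rt).IsTree :=
  ⟨glue_connected Tg rt (fun i => (h i).isConnected),
   glue_isAcyclic Tg rt (fun i => (h i).IsAcyclic)⟩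

end GlueTree

section MainRec
variable (C : GraphClass) {V : Type} [Finite V] (G : SimpleGraph V) (k : ℕ)

structure Win (A B : Set V) where
  X : Set V
  T : Type
  fin : Finite T
  Tg : SimpleGraph T
  β : T → Set V
  r : T
  tree : Tg.IsTree
  bag_sub : ∀ t, β t ⊆ X
  cover : ∀ x ∈ X, ∃ t, x ∈ β t
  root : B ⊆ β r
  size : ∀ t, (β t).ncard ≤ 4 * k + 5
  Xsub : X ⊆ A ∪ B
  Bsub : B ⊆ X
  edge : ∀ u v, u ∈ X → v ∈ X → G.Adj u v → ∃ t, u ∈ β t ∧ v ∈ β t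
  conn : ∀ v ∈ X, (Tg.induce {t | v ∈ β t}).Connected
  comp : ∀ v ∈ A, v ∉ X → ∃ K, v ∈ K ∧ K ⊆ A ∧ K ∩ X = ∅ ∧
    (∀ a ∈ K, ∀ x, G.Adj a x → x ∈ K ∪ X) ∧ (G.induce K).Connected ∧
    C ↥K (G.induce K) ∧ ∃ t, ∀ x ∈ X, (∃ a ∈ K, G.Adj a x) → x ∈ β t

lemma win_rec (hmc : MinorClosed C)
    (Hsep : ∀ B : Set V, B.ncard = 3 * k + 4 → ∃ S : Set V, S.ncard ≤ k + 1 ∧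
      ∀ K, IsCompOf G S K → ¬ C ↥K (G.induce K) → 3 * (K ∩ B).ncard ≤ 2 * B.ncard) :
    ∀ (n : ℕ) (A B : Set V), A ∩ B = ∅ →
      (∀ a ∈ A, ∀ x, G.Adj a x → x ∈ A ∪ B) → B.ncard ≤ 3 * k + 4 →
      2 * A.ncard + (if 3 * k + 4 ≤ B.ncard then 1 else 0) ≤ n →
      Nonempty (Win C G k A B) := by
  intro n
  induction n using Nat.strong_induction_on with
  | _ n IH =>
  intro A B hdisj hcl hBcard hn
  rcases Set.eq_empty_or_nonempty A with hA | hA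
  · -- base case : A = ∅
    subst hA
    refine ⟨⟨B, Unit, inferInstance, ⊥, fun _ => B, ⟨⟩, ?_, ?_, ?_, ?_, ?_, ?_, ?_, ?_, ?_, ?_⟩⟩
    · exact ⟨connected_of_subsingleton _, isAcyclic_bot⟩
    · intro t; exact Set.Subset.rfl
    · intro x hx; exact ⟨⟨⟩, hx⟩
    · exact Set.Subset.rfl
    · intro t; show B.ncard ≤ 4 * k + 5; omega
    · exact Set.subset_union_right
    · exact Set.Subset.rfl
    · intro u v hu hv _; exact ⟨⟨⟩, hu, hv⟩
    · intro v hv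
      haveI : Nonempty ↥{t : Unit | v ∈ B} := ⟨⟨⟨⟩, hv⟩⟩
      exact connected_of_subsingleton _
    · intro v hv; simp at hv
  · by_cases hBsmall : B.ncard ≤ 3 * k + 3
    · -- add a vertex of A to B
      obtain ⟨a, ha⟩ := hA
      have hsub : A \ {a} ⊆ A := Set.diff_subset
      have hm : 2 * (A \ {a}).ncard + (if 3 * k + 4 ≤ (insert a B).ncard then 1 else 0) < n := by
        have h1 : (A \ {a}).ncard = A.ncard - 1 := Set.ncard_diff_singleton_of_mem ha
        have h2 : 0 < A.ncard := (Set.ncard_pos A.toFinite).mpr ⟨a, ha⟩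
        have h3 : (if 3 * k + 4 ≤ B.ncard then 1 else 0) = 0 := by
          rw [if_neg]; omega
        split <;> omega
      have hBA : a ∉ B := by
        intro hc
        have : a ∈ A ∩ B := ⟨ha, hc⟩
        simp [hdisj] at this
      obtain ⟨wn⟩ := IH _ hm (A \ {a}) (insert a B)
        (by
          ext x
          simp only [Set.mem_inter_iff, Set.mem_diff, Set.mem_singleton_iff, Set.mem_insert_iff]
          constructor
          · rintro ⟨⟨hxA, hxa⟩, hxB | hxB⟩
            · exact absurd hxB hxa
            · have : x ∈ A ∩ B := ⟨hxA, hxB⟩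
              rw [hdisj] at this; exact this
          · intro h; simp at h)
        (by
          intro b hb x hx
          rcases hcl b hb.1 x hx with h | h
          · by_cases hxa : x = a
            · exact Or.inr (Or.inl hxa)
            · exact Or.inl ⟨h, hxa⟩
          · exact Or.inr (Or.inr h))
        (by
          have := Set.ncard_insert_le a B
          omega)
        le_rfl
      refine ⟨⟨wn.X, wn.T, wn.fin, wn.Tg, wn.β, wn.r, wn.tree, wn.bag_sub, wn.cover,
        fun b hb => wn.root (Set.mem_insert_of_mem a hb), wn.size, ?_, ?_, wn.edge, wn.conn, ?_⟩⟩
      · intro x hx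
        rcases wn.Xsub hx with h | h
        · exact Or.inl h.1
        · rcases h with h | h
          · exact Or.inl (h ▸ ha)
          · exact Or.inr h
      · intro b hb
        exact wn.Bsub (Set.mem_insert_of_mem a hb)
      · intro v hv hvX
        have hva : v ≠ a := by
          intro hc
          subst hc; exact hvX (wn.Bsub (Set.mem_insert v B))
        obtain ⟨K, h1, h2, h3, h4, h5, h6, h7⟩ := wn.comp v ⟨hv, hva⟩ hvX
        exact ⟨K, h1, h2.trans hsub, h3, h4, h5, h6, h7⟩
    · -- separation case
      have hBeq : B.ncard = 3 * k + 4 := by omega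
      obtain ⟨S₀, hS₀card, hS₀⟩ := Hsep B hBeq
      set S : Set V := S₀ ∩ A with hSdef
      set Y : Set V := B ∪ S with hYdef
      have hBY : B ⊆ Y := Set.subset_union_left
      have hYA : Y ⊆ A ∪ B := by
        intro x hx
        rcases hx with h | h
        · exact Or.inr h
        · exact Or.inl h.2
      have hYcard : Y.ncard ≤ 4 * k + 5 := by
        have h1 : Y.ncard ≤ B.ncard + S.ncard := by
          rw [hYdef]; exact Set.ncard_union_le B S
        have h2 : S.ncard ≤ S₀.ncard := Set.ncard_le_ncard Set.inter_subset_left S₀.toFinite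
        omega
      haveI hDfin : Finite ((G.induce (Yᶜ : Set V)).ConnectedComponent) :=
        Finite.of_surjective _ (fun D => D.exists_rep)
      let ι := {D : (G.induce (Yᶜ : Set V)).ConnectedComponent //
        Subtype.val '' D.supp ⊆ A ∧
        ¬ C ↥(Subtype.val '' D.supp) (G.induce (Subtype.val '' D.supp))}
      let K : ι → Set V := fun i => Subtype.val '' i.1.supp
      have hKA : ∀ i : ι, K i ⊆ A := fun i => i.2.1
      have hKC : ∀ i : ι, ¬ C ↥(K i) (G.induce (K i)) := fun i => i.2.2
      have hKYnot : ∀ (i : ι) (x : V), x ∈ K i → x ∉ Y := by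
        rintro i x ⟨xh, hm, rfl⟩
        exact xh.2
      have hKne : ∀ i : ι, ∃ v, v ∈ K i := by
        intro i
        obtain ⟨vh, hm⟩ := i.1.exists_rep
        exact ⟨vh.1, ⟨vh, (ConnectedComponent.mem_supp_iff _ _).mpr hm, rfl⟩⟩
      have hKeq : ∀ (i : ι) (v : V) (hv : v ∈ K i), ∃ hv' : v ∉ Y, K i = cSet G Y v hv' := by
        rintro i v ⟨vh, hm, rfl⟩
        refine ⟨vh.2, ?_⟩
        have hmk : (G.induce (Yᶜ : Set V)).connectedComponentMk ⟨vh.1, vh.2⟩ = i.1 := by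
          rw [Subtype.coe_eta]
          exact (ConnectedComponent.mem_supp_iff _ _).mp hm
        show Subtype.val '' i.1.supp =
          Subtype.val '' ((G.induce (Yᶜ : Set V)).connectedComponentMk ⟨vh.1, vh.2⟩).supp
        rw [hmk]
      have hKconn : ∀ i : ι, (G.induce (K i)).Connected := by
        intro i
        obtain ⟨v, hv⟩ := hKne i
        obtain ⟨hv', heq⟩ := hKeq i v hv
        rw [heq]
        exact cSet_connected G Y v hv'
      have hKclosed : ∀ (i : ι) (a : V), a ∈ K i → ∀ x, G.Adj a x → x ∉ Y → x ∈ K i := by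
        intro i a ha x hadj hx
        obtain ⟨ha', heq⟩ := hKeq i a ha
        rw [heq]
        exact cSet_closed G (self_mem_cSet G ha') hadj hx
      have hKdisj : ∀ (i j : ι) (x : V), x ∈ K i → x ∈ K j → i = j := by
        rintro i j x ⟨xh, hmi, rfl⟩ ⟨yh, hmj, hxy⟩
        have hyx : yh = xh := Subtype.ext hxy
        subst hyx
        apply Subtype.ext
        rw [← (ConnectedComponent.mem_supp_iff _ _).mp hmi,
            ← (ConnectedComponent.mem_supp_iff _ _).mp hmj]
      set B' : ι → Set V := fun i => {x | x ∈ Y ∧ ∃ a ∈ K i, G.Adj a x} with hB'def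
      have hB'Y : ∀ i, B' i ⊆ Y := fun i x hx => hx.1
      have hB'card : ∀ i, (B' i).ncard ≤ 3 * k + 3 := by
        intro i
        obtain ⟨a₀, ha₀⟩ := hKne i
        have ha₀A : a₀ ∈ A := hKA i ha₀
        have ha₀Y : a₀ ∉ Y := hKYnot i a₀ ha₀
        have ha₀S₀ : a₀ ∉ S₀ := fun hc => ha₀Y (Or.inr ⟨hc, ha₀A⟩)
        have hnotS₀ : ∀ x ∈ K i, x ∉ S₀ := by
          intro x hx hc
          exact hKYnot i x hx (Or.inr ⟨hc, hKA i hx⟩)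
        have hKsubhat : K i ⊆ cSet G S₀ a₀ ha₀S₀ :=
          subset_cSet G ha₀S₀ ha₀ hnotS₀ (hKconn i)
        have hCKhat : ¬ C ↥(cSet G S₀ a₀ ha₀S₀) (G.induce (cSet G S₀ a₀ ha₀S₀)) :=
          fun hc => hKC i (C_mono G C hmc hKsubhat hc)
        have hKhatB := hS₀ _ (isCompOf_cSet G S₀ a₀ ha₀S₀) hCKhat
        have hsub : B' i ⊆ (cSet G S₀ a₀ ha₀S₀ ∩ B) ∪ S₀ := by
          rintro x ⟨hxY, a, haK, hadj⟩
          by_cases hxS : x ∈ S₀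
          · exact Or.inr hxS
          · have hxB : x ∈ B := by
              rcases hxY with h | h
              · exact h
              · exact absurd h.1 hxS
            exact Or.inl ⟨cSet_closed G (hKsubhat haK) hadj hxS, hxB⟩
        have h1 : (B' i).ncard ≤ (cSet G S₀ a₀ ha₀S₀ ∩ B).ncard + S₀.ncard :=
          le_trans (Set.ncard_le_ncard hsub (Set.toFinite _)) (Set.ncard_union_le _ _)
        omega
      have hchild : ∀ i : ι, Nonempty (Win C G k (K i) (B' i)) := by
        intro i
        have hmeas : 2 * (K i).ncard + (if 3 * k + 4 ≤ (B' i).ncard then 1 else 0) < n := by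
          have h1 : (K i).ncard ≤ A.ncard := Set.ncard_le_ncard (hKA i) A.toFinite
          have h2 : (if 3 * k + 4 ≤ (B' i).ncard then 1 else 0) = 0 := by
            rw [if_neg]
            have := hB'card i
            omega
          have h3 : (if 3 * k + 4 ≤ B.ncard then 1 else 0) = 1 := by rw [if_pos]; omega
          rw [h2]
          rw [h3] at hn
          omega
        refine IH _ hmeas (K i) (B' i) ?_ ?_ (by have := hB'card i; omega) le_rfl
        · ext x
          simp only [Set.mem_inter_iff, Set.mem_empty_iff_false, iff_false, not_and]
          intro hxK hxB'
          exact hKYnot i x hxK (hB'Y i hxB')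
        · intro a ha x hadj
          by_cases hxY : x ∈ Y
          · exact Or.inr ⟨hxY, a, ha, hadj⟩
          · exact Or.inl (hKclosed i a ha x hadj hxY)
      have w : ∀ i : ι, Win C G k (K i) (B' i) := fun i => (hchild i).some
      haveI hwfin : ∀ i : ι, Finite (w i).T := fun i => (w i).fin
      haveI hιfin : Finite ι := Subtype.finite
      haveI hsigfin : Finite ((i : ι) × (w i).T) := Finite.instSigma
      haveI hoptfin : Finite (Option ((i : ι) × (w i).T)) :=
        Finite.of_equiv _ (Equiv.optionEquivSumPUnit.{0,0} _).symm
      let bagf : Option (Σ i : ι, (w i).T) → Set V :=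
        fun t => Option.rec Y (fun s => (w s.1).β s.2) t
      set X : Set V := Y ∪ ⋃ i, (w i).X with hXdef
      have hYX : Y ⊆ X := Set.subset_union_left
      have hwX : ∀ i : ι, (w i).X ⊆ X := fun i =>
        Set.Subset.trans (Set.subset_iUnion (fun i => (w i).X) i) Set.subset_union_right
      have hXw : ∀ i : ι, (w i).X ⊆ K i ∪ B' i := fun i => (w i).Xsub
      have claimXK : ∀ (i : ι) (x : V), x ∈ X → x ∈ K i → x ∈ (w i).X := by
        intro i x hxX hxK
        rcases hxX with hxY | hxU
        · exact absurd hxY (fun h => hKYnot i x hxK h)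
        · obtain ⟨j, hj⟩ := Set.mem_iUnion.mp hxU
          rcases hXw j hj with hxKj | hxBj
          · have hji : j = i := hKdisj j i x hxKj hxK
            subst hji
            exact hj
          · exact absurd (hB'Y j hxBj) (hKYnot i x hxK)
      have keyEdge : ∀ u v, u ∈ X → v ∈ X → G.Adj u v → u ∉ Y →
          ∃ (i : ι) (t : (w i).T), u ∈ (w i).β t ∧ v ∈ (w i).β t := by
        intro u v hu hv hadj huY
        have hiU : u ∈ ⋃ i, (w i).X := by
          rcases hu with h | h
          · exact absurd h huY
          · exact h
        obtain ⟨i, hi⟩ := Set.mem_iUnion.mp hiU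
        have huK : u ∈ K i := by
          rcases hXw i hi with h | h
          · exact h
          · exact absurd (hB'Y i h) huY
        have hvX : v ∈ (w i).X := by
          by_cases hvY : v ∈ Y
          · exact (w i).Bsub ⟨hvY, u, huK, hadj⟩
          · exact claimXK i v hv (hKclosed i u huK v hadj hvY)
        obtain ⟨t, h1, h2⟩ := (w i).edge u v (claimXK i u hu huK) hvX hadj
        exact ⟨i, t, h1, h2⟩
      refine ⟨⟨X, Option (Σ i : ι, (w i).T), inferInstance,
        glue (fun i => (w i).Tg) (fun i => (w i).r),
        bagf, none,
        glue_isTree _ _ (fun i => (w i).tree), ?_, ?_, ?_, ?_, ?_, ?_, ?_, ?_, ?_⟩⟩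
      · rintro (_ | s)
        · exact hYX
        · exact Set.Subset.trans ((w s.1).bag_sub s.2) (hwX s.1)
      · intro x hx
        rcases hx with hxY | hxU
        · exact ⟨none, hxY⟩
        · obtain ⟨i, hi⟩ := Set.mem_iUnion.mp hxU
          obtain ⟨t, ht⟩ := (w i).cover x hi
          exact ⟨some ⟨i, t⟩, ht⟩
      · exact fun b hb => hBY hb
      · rintro (_ | s)
        · exact hYcard
        · exact (w s.1).size s.2
      · intro x hx
        rcases hx with hxY | hxU
        · exact hYA hxY
        · obtain ⟨i, hi⟩ := Set.mem_iUnion.mp hxU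
          rcases hXw i hi with h | h
          · exact Or.inl (hKA i h)
          · exact hYA (hB'Y i h)
      · exact Set.Subset.trans hBY hYX
      · intro u v hu hv hadj
        by_cases huY : u ∈ Y
        · by_cases hvY : v ∈ Y
          · exact ⟨none, huY, hvY⟩
          · obtain ⟨i, t, h1, h2⟩ := keyEdge v u hv hu hadj.symm hvY
            exact ⟨some ⟨i, t⟩, h2, h1⟩
        · obtain ⟨i, t, h1, h2⟩ := keyEdge u v hu hv hadj huY
          exact ⟨some ⟨i, t⟩, h1, h2⟩
      · -- conn
        intro v hvX
        by_cases hvY : v ∈ Y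
        · refine connected_of_all_reach ⟨none, hvY⟩ ?_
          rintro ⟨t, ht⟩
          cases t with
          | none => exact Reachable.refl _
          | some s =>
            obtain ⟨i, t⟩ := s
            have htv : v ∈ (w i).β t := ht
            have hvXi : v ∈ (w i).X := (w i).bag_sub t htv
            have hvB' : v ∈ B' i := by
              rcases hXw i hvXi with h | h
              · exact absurd hvY (hKYnot i v h)
              · exact h
            have hvr : v ∈ (w i).β (w i).r := (w i).root hvB'
            have hreach : ((w i).Tg.induce {t | v ∈ (w i).β t}).Reachable ⟨t, htv⟩
                ⟨(w i).r, hvr⟩ := ((w i).conn v hvXi).preconnected _ _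
            have hmap := reach_map_induce
              (G₁ := (w i).Tg)
              (G₂ := glue (fun i => (w i).Tg) (fun i => (w i).r))
              (f := fun t => some ⟨i, t⟩)
              (fun a b h => glue_adj_of_adj _ _ h)
              (s := {t | v ∈ (w i).β t})
              (t := {t : Option (Σ i : ι, (w i).T) | v ∈ bagf t})
              (fun a ha => ha) hreach
            have hstep : ((glue (fun i => (w i).Tg) (fun i => (w i).r)).induce
                {t : Option (Σ i : ι, (w i).T) | v ∈ bagf t}).Adj
                ⟨some ⟨i, (w i).r⟩, (by exact hvr : v ∈ bagf (some ⟨i, (w i).r⟩))⟩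
                ⟨none, (by exact hvY : v ∈ bagf none)⟩ :=
              (glue_adj_root (fun i => (w i).Tg) (fun i => (w i).r) i).symm
            exact hmap.trans hstep.reachable
        · have hvU : v ∈ ⋃ i, (w i).X := by
            rcases hvX with h | h
            · exact absurd h hvY
            · exact h
          obtain ⟨i₀, hi₀⟩ := Set.mem_iUnion.mp hvU
          have hvK₀ : v ∈ K i₀ := by
            rcases hXw i₀ hi₀ with h | h
            · exact h
            · exact absurd (hB'Y i₀ h) hvY
          obtain ⟨t₀, ht₀⟩ := (w i₀).cover v hi₀
          refine connected_of_all_reach ⟨some ⟨i₀, t₀⟩, ht₀⟩ ?_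
          rintro ⟨t, ht⟩
          cases t with
          | none => exact absurd ht hvY
          | some s =>
            obtain ⟨j, t⟩ := s
            have htv : v ∈ (w j).β t := ht
            have hvXj : v ∈ (w j).X := (w j).bag_sub t htv
            have hvKj : v ∈ K j := by
              rcases hXw j hvXj with h | h
              · exact h
              · exact absurd (hB'Y j h) hvY
            have hji : j = i₀ := hKdisj j i₀ v hvKj hvK₀
            subst hji
            have hreach : ((w j).Tg.induce {t | v ∈ (w j).β t}).Reachable ⟨t, htv⟩
                ⟨t₀, ht₀⟩ := ((w j).conn v hvXj).preconnected _ _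
            exact reach_map_induce
              (G₁ := (w j).Tg)
              (G₂ := glue (fun i => (w i).Tg) (fun i => (w i).r))
              (f := fun t => some ⟨j, t⟩)
              (fun a b h => glue_adj_of_adj _ _ h)
              (s := {t | v ∈ (w j).β t})
              (t := {t : Option (Σ i : ι, (w i).T) | v ∈ bagf t})
              (fun a ha => ha) hreach
      · -- comp
        intro v hvA hvX
        have hvY : v ∉ Y := fun hc => hvX (hYX hc)
        have hKsubA : cSet G Y v hvY ⊆ A := cSet_subset_of_closed G hvY hcl hBY hvA
        by_cases hCK : C ↥(cSet G Y v hvY) (G.induce (cSet G Y v hvY))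
        · have hKXempty : cSet G Y v hvY ∩ X = ∅ := by
            ext x
            simp only [Set.mem_inter_iff, Set.mem_empty_iff_false, iff_false, not_and]
            intro hxK hxX
            have hxY : x ∉ Y := cSet_not_mem G hxK
            have hxU : x ∈ ⋃ i, (w i).X := by
              rcases hxX with h | h
              · exact absurd h hxY
              · exact h
            obtain ⟨i, hi⟩ := Set.mem_iUnion.mp hxU
            have hxKi : x ∈ K i := by
              rcases hXw i hi with h | h
              · exact h
              · exact absurd (hB'Y i h) hxY
            obtain ⟨hx', heq⟩ := hKeq i x hxKi
            have heq2 : cSet G Y x hx' = cSet G Y v hvY := cSet_eq_cSet G hxK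
            have hKiv : K i = cSet G Y v hvY := heq.trans heq2
            exact hKC i (C_congr G C hKiv.symm hCK)
          refine ⟨cSet G Y v hvY, self_mem_cSet G hvY, hKsubA, hKXempty, ?_,
            cSet_connected G Y v hvY, hCK, ⟨none, ?_⟩⟩
          · intro a ha x hadj
            by_cases hxY : x ∈ Y
            · exact Or.inr (hYX hxY)
            · exact Or.inl (cSet_closed G ha hadj hxY)
          · rintro x hxX ⟨a, haK, hadj⟩
            by_cases hxY : x ∈ Y
            · exact hxY
            · exfalso
              have hxK : x ∈ cSet G Y v hvY := cSet_closed G haK hadj hxY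
              have : x ∈ cSet G Y v hvY ∩ X := ⟨hxK, hxX⟩
              rw [hKXempty] at this
              exact this
        · let i₀ : ι := ⟨(G.induce (Yᶜ : Set V)).connectedComponentMk ⟨v, hvY⟩, hKsubA, hCK⟩
          have hvKi₀ : v ∈ K i₀ := self_mem_cSet G hvY
          have hvnX : v ∉ (w i₀).X := fun hc => hvX (hwX i₀ hc)
          obtain ⟨K', h1, h2, h3, h4, h5, h6, t', h7⟩ := (w i₀).comp v hvKi₀ hvnX
          have hK'X : K' ∩ X = ∅ := by
            ext x
            simp only [Set.mem_inter_iff, Set.mem_empty_iff_false, iff_false, not_and]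
            intro hxK' hxX
            have hxKi₀ : x ∈ K i₀ := h2 hxK'
            have hxw : x ∈ (w i₀).X := claimXK i₀ x hxX hxKi₀
            have : x ∈ K' ∩ (w i₀).X := ⟨hxK', hxw⟩
            rw [h3] at this
            exact this
          refine ⟨K', h1, Set.Subset.trans h2 (hKA i₀), hK'X, ?_, h5, h6,
            ⟨some ⟨i₀, t'⟩, ?_⟩⟩
          · intro a ha x hadj
            rcases h4 a ha x hadj with h | h
            · exact Or.inl h
            · exact Or.inr (hwX i₀ h)
          · rintro x hxX ⟨a, haK', hadj⟩
            rcases h4 a haK' x hadj with h | h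
            · exfalso
              have : x ∈ K' ∩ X := ⟨h, hxX⟩
              rw [hK'X] at this
              exact this
            · exact h7 x h ⟨a, haK', hadj⟩

end MainRec

/-- **Lemma 11.5.** Let `C` be a nonempty proper minor-closed graph class. For every
graph `G`, `C`-tw(G) ≤ 4 · `C`-link(G) + 4. -/
theorem Htw_le_four_Hlink_add_four (C : GraphClass)
    (hne : NonemptyClass C) (hmc : MinorClosed C) (hproper : ProperClass C)
    {V : Type} [Finite V] (G : SimpleGraph V) :
    Htw C G ≤ 4 * Hlink C G + 4 := by
  classical
  set k := Hlink C G with hk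
  -- the linkedness set is bounded above
  have hbdd : ∀ k' ∈ {k' : ℕ | ∃ X : Set V, HLinked C G k' X}, k' ≤ Nat.card V := by
    rintro k' ⟨Xl, hXl⟩
    by_contra hgt
    push_neg at hgt
    have huniv : (Set.univ : Set V).ncard ≤ k' := by
      rw [Set.ncard_univ]; omega
    obtain ⟨K, hK, -, -⟩ := hXl Set.univ huniv
    obtain ⟨D, hD⟩ := hK
    obtain ⟨vh, hmk⟩ := D.exists_rep
    have h2 := vh.2
    simp at h2
  have hnot : ∀ X' : Set V, ¬ HLinked C G (k + 1) X' := by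
    intro X' hX'
    have hmem : k + 1 ∈ {k' : ℕ | ∃ X : Set V, HLinked C G k' X} := ⟨X', hX'⟩
    have hle : k + 1 ≤ sSup {k' : ℕ | ∃ X : Set V, HLinked C G k' X} :=
      le_csSup ⟨Nat.card V, fun x hx => hbdd x hx⟩ hmem
    rw [hk, Hlink] at hle
    omega
  have Hsep : ∀ B : Set V, B.ncard = 3 * k + 4 → ∃ S : Set V, S.ncard ≤ k + 1 ∧
      ∀ K, IsCompOf G S K → ¬ C ↥K (G.induce K) → 3 * (K ∩ B).ncard ≤ 2 * B.ncard := by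
    intro B hB
    have h := hnot B
    rw [HLinked] at h
    push_neg at h
    obtain ⟨S, h5, h6⟩ := h
    exact ⟨S, h5, fun K h1 h2 => h6 K h1 h2⟩
  obtain ⟨win⟩ := win_rec C G k hmc Hsep (2 * (Set.univ : Set V).ncard + 1)
    Set.univ ∅ (by simp) (by intro a _ x _; simp) (by simp)
    (by
      rw [if_neg (by simp)]
      omega)
  -- identification of components of G - X
  have hmain : ∀ K : Set V, IsCompOf G win.X K →
      C ↥K (G.induce K) ∧ ∃ t, ∀ x ∈ win.X, (∃ a ∈ K, G.Adj a x) → x ∈ win.β t := by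
    intro K hK
    obtain ⟨D, rfl⟩ := hK
    obtain ⟨vh, hmk⟩ := D.exists_rep
    have hv : vh.1 ∉ win.X := vh.2
    have h1 : Subtype.val '' D.supp = cSet G win.X vh.1 hv := by
      show _ = Subtype.val '' _
      rw [← hmk, Subtype.coe_eta]
      rfl
    obtain ⟨K₂, hm2, -, h3, h4, h5, h6, t, h7⟩ :=
      win.comp vh.1 (Set.mem_univ _) hv
    have h2 : K₂ = cSet G win.X vh.1 hv := by
      refine cSet_eq_of G hv hm2 ?_ ?_ h5
      · intro x hx hxX
        have : x ∈ K₂ ∩ win.X := ⟨hx, hxX⟩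
        rw [h3] at this
        exact this
      · intro a ha x hadj hxX
        rcases h4 a ha x hadj with h | h
        · exact h
        · exact absurd h hxX
    have heq : K₂ = Subtype.val '' D.supp := h2.trans h1.symm
    constructor
    · exact C_congr G C heq h6
    · refine ⟨t, ?_⟩
      rw [← heq]
      exact h7
  refine Nat.sInf_le ⟨win.X, ?_, ?_⟩
  · intro K hK
    exact (hmain K hK).1
  · refine ⟨win.T, win.fin, win.Tg, fun t => Subtype.val ⁻¹' win.β t,
      ⟨win.tree, ?_, ?_, ?_⟩, ?_⟩
    · rintro ⟨x, hx⟩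
      obtain ⟨t, ht⟩ := win.cover x hx
      exact ⟨t, ht⟩
    · rintro ⟨u, hu⟩ ⟨v, hv⟩ hadj
      rw [torso, fromRel_adj] at hadj
      obtain ⟨hne', h | h⟩ := hadj
      · rcases h with h | ⟨K, hK, ⟨w₁, hw₁, hadj₁⟩, ⟨w₂, hw₂, hadj₂⟩⟩
        · obtain ⟨t, h1, h2⟩ := win.edge u v hu hv h
          exact ⟨t, h1, h2⟩
        · obtain ⟨-, t, hbag⟩ := hmain K hK
          exact ⟨t, hbag u hu ⟨w₁, hw₁, hadj₁.symm⟩, hbag v hv ⟨w₂, hw₂, hadj₂.symm⟩⟩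
      · rcases h with h | ⟨K, hK, ⟨w₁, hw₁, hadj₁⟩, ⟨w₂, hw₂, hadj₂⟩⟩
        · obtain ⟨t, h1, h2⟩ := win.edge v u hv hu h
          exact ⟨t, h2, h1⟩
        · obtain ⟨-, t, hbag⟩ := hmain K hK
          exact ⟨t, hbag u hu ⟨w₂, hw₂, hadj₂.symm⟩, hbag v hv ⟨w₁, hw₁, hadj₁.symm⟩⟩
    · rintro ⟨v, hv⟩
      exact win.conn v hv
    · intro t
      have h1 : (Subtype.val ⁻¹' win.β t : Set ↥win.X).ncard =
          (Subtype.val '' (Subtype.val ⁻¹' win.β t : Set ↥win.X)).ncard :=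
        (Set.ncard_image_of_injective _ Subtype.val_injective).symm
      have h2 : (Subtype.val '' (Subtype.val ⁻¹' win.β t : Set ↥win.X)).ncard ≤
          (win.β t).ncard :=
        Set.ncard_le_ncard (Set.image_preimage_subset _ _) (Set.toFinite _)
      have h3 := win.size t
      show (Subtype.val ⁻¹' win.β t : Set ↥win.X).ncard ≤ 4 * k + 4 + 1
      omega
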